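/- Consider the delayed relay feedback system u^P = −Q_P^{P_d} H_{ḡ₀^P} sign(u^P) with P_d ≥ 1 and g₀ ∈ ℓ¹ strictly positive and strictly decreasing on its support {0,1,2,…}. If a self-oscillation of period 2P_d with sign pattern [1_{P_d}ᵀ, −1_{P_d}ᵀ]ᵀ exists, then for every n ∈ ℤ≥0 such that P = 2P_d/(2n+1) is a positive integer, there exists a self-oscillation of period P with sign pattern [1_{P/2}ᵀ, −1_{P/2}ᵀ]ᵀ. -/

import Mathlib

open scoped BigOperators

/-- Number of sign changes in a list of reals after deleting zero entries;
`-1` if all entries are zero. -/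
noncomputable def signChangesList (l : List ℝ) : ℤ :=
  let nz := l.filter (fun x => decide (x ≠ 0))
  if nz.isEmpty then -1
  else ((nz.zip nz.tail).countP (fun p => decide (p.1 * p.2 < 0)) : ℤ)

/-- `S⁻(v)`: number of sign changes of `v` after deleting zeros (`-1` for `v = 0`). -/
noncomputable def Sminus {n : ℕ} (v : Fin n → ℝ) : ℤ :=
  signChangesList (List.ofFn v)

/-- `w` is obtained from `v` by replacing (some of the) zero entries by arbitrary reals. -/
def FillsZeros {n : ℕ} (v w : Fin n → ℝ) : Prop := ∀ i, v i ≠ 0 → w i = v i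

/-- `S⁺(v)`: maximum of `S⁻` over all fillings of the zero entries of `v`. -/
noncomputable def Splus {n : ℕ} (v : Fin n → ℝ) : ℤ :=
  sSup {z : ℤ | ∃ w : Fin n → ℝ, FillsZeros v w ∧ z = Sminus w}

/-- the rotated list `[v i, v (i+1), …, v (i+n-1), v i]`. -/
noncomputable def cycList {n : ℕ} (v : Fin n → ℝ) (i : Fin n) : List ℝ :=
  (List.ofFn fun j : Fin n => v (i + j)) ++ [v i]

/-- cyclic variation `S_c⁻(v)`: the supremum of `S⁻` over all cyclic rotations
`[v_i, …, v_n, v_1, …, v_i]` of `v`. -/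
noncomputable def Scminus {n : ℕ} (v : Fin n → ℝ) : ℤ :=
  sSup {z : ℤ | ∃ i : Fin n, z = signChangesList (cycList v i)}

/-- cyclic variation `S_c⁺(v)`: the supremum of `S_c⁻` over all fillings of the
zero entries of `v`. -/
noncomputable def Scplus {n : ℕ} (v : Fin n → ℝ) : ℤ :=
  sSup {z : ℤ | ∃ w : Fin n → ℝ, FillsZeros v w ∧ z = Scminus w}

/-- cyclic successor index `i + 1 (mod n)`. -/
def cnext {n : ℕ} (i : Fin n) : Fin n :=
  ⟨(i.val + 1) % n, Nat.mod_lt _ (Nat.lt_of_le_of_lt (Nat.zero_le _) i.isLt)⟩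

/-- cyclic predecessor index `i - 1 (mod n)`. -/
def cprev {n : ℕ} (i : Fin n) : Fin n :=
  ⟨(i.val + (n - 1)) % n, Nat.mod_lt _ (Nat.lt_of_le_of_lt (Nat.zero_le _) i.isLt)⟩

/-- cyclic forward difference `(Δ_c v)_i = v_{i+1 (mod n)} - v_i`. -/
noncomputable def cdiff {n : ℕ} (v : Fin n → ℝ) : Fin n → ℝ :=
  fun i => v (cnext i) - v i

/-- number of positive entries. -/
noncomputable def Pp {n : ℕ} (v : Fin n → ℝ) : ℕ :=
  (Finset.univ.filter fun i => 0 < v i).card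

/-- number of negative entries. -/
noncomputable def Pn {n : ℕ} (v : Fin n → ℝ) : ℕ :=
  (Finset.univ.filter fun i => v i < 0).card

/-- one period of the `P`-periodic summation `ḡ(t) = ∑_{k ∈ ℤ} g(t + kP)`. -/
noncomputable def pbar (g : ℤ → ℝ) (P : ℕ) : Fin P → ℝ :=
  fun i => ∑' k : ℤ, g (((i : ℕ) : ℤ) + k * (P : ℤ))

/-- convolution `(g ∗ u)(t) = ∑_{τ ∈ ℤ} g(t - τ) u(τ)`. -/
noncomputable def conv (g u : ℤ → ℝ) : ℤ → ℝ :=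
  fun t => ∑' τ : ℤ, g (t - τ) * u τ

/-- the cyclic back-shift matrix `Q_P`, mapping `e_j` to `e_{j+1 (mod P)}`. -/
def Qmat (P : ℕ) : Matrix (Fin P) (Fin P) ℝ :=
  Matrix.of fun i j => if (i : ℕ) = ((j : ℕ) + 1) % P then 1 else 0

/-! Auxiliary definitions and lemmas -/

/-- `M`-periodization of `g0` evaluated at a natural number `r`. -/
noncomputable def Wf (g0 : ℤ → ℝ) (M : ℕ) (r : ℕ) : ℝ :=
  ∑' k : ℤ, g0 ((r : ℤ) + k * (M : ℤ))

/-- square wave of period `P` (as a function on `ℕ`). -/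
noncomputable def sqw (P t : ℕ) : ℝ := if t % P < P / 2 then 1 else -1

lemma sqw_mod (P t : ℕ) : sqw P (t % P) = sqw P t := by
  simp [sqw, Nat.mod_mod_of_dvd t (dvd_refl P)]

lemma sqw_period (P t k : ℕ) : sqw P (t + k * P) = sqw P t := by
  simp [sqw, Nat.add_mul_mod_self_right]

lemma sqw_flip (P t : ℕ) (h2 : P = 2 * (P / 2)) (h0 : 0 < P) :
    sqw P (t + P / 2) = -sqw P t := by
  have hu : t % P < P := Nat.mod_lt _ h0
  have hPhP : P / 2 < P := by omega
  rcases lt_or_ge (t % P) (P / 2) with h | h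
  · have hargmod : (t + P / 2) % P = t % P + P / 2 := by
      rw [Nat.add_mod, Nat.mod_eq_of_lt hPhP, Nat.mod_eq_of_lt (by omega)]
    rw [show sqw P (t + P / 2) = -1 from if_neg (by rw [hargmod]; omega),
      show sqw P t = 1 from if_pos h]
  · have hargmod : (t + P / 2) % P = t % P - P / 2 := by
      rw [Nat.add_mod, Nat.mod_eq_of_lt hPhP, Nat.mod_eq_sub_mod (by omega),
        show t % P + P / 2 - P = t % P - P / 2 by omega]
      exact Nat.mod_eq_of_lt (by omega)
    rw [show sqw P (t + P / 2) = 1 from if_pos (by rw [hargmod]; omega),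
      show sqw P t = -1 from if_neg (by omega)]
    norm_num

lemma sqw_one {P t : ℕ} (h : t % P < P / 2) : sqw P t = 1 := if_pos h
lemma sqw_neg_one {P t : ℕ} (h : ¬ t % P < P / 2) : sqw P t = -1 := if_neg h

lemma sqw_cases (P t : ℕ) : sqw P t = 1 ∨ sqw P t = -1 := by
  unfold sqw; split <;> simp

section gfacts

variable {g0 : ℤ → ℝ}

lemma g_zero (hsupp : Function.support g0 = {t : ℤ | 0 ≤ t}) {t : ℤ} (ht : t < 0) :
    g0 t = 0 := by
  by_contra h
  have h2 : t ∈ Function.support g0 := h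
  rw [hsupp] at h2
  exact absurd h2 (by simpa using ht)

lemma g_nonneg (hsupp : Function.support g0 = {t : ℤ | 0 ≤ t})
    (hpos : ∀ t : ℤ, 0 ≤ t → 0 < g0 t) (t : ℤ) : 0 ≤ g0 t := by
  rcases le_or_gt 0 t with h | h
  · exact (hpos t h).le
  · rw [g_zero hsupp h]

lemma g_anti (hdec : ∀ t : ℤ, 0 ≤ t → g0 (t + 1) < g0 t) {s t : ℤ}
    (hs : 0 ≤ s) (hst : s ≤ t) : g0 t ≤ g0 s := by
  refine Int.le_induction (motive := fun t _ => g0 t ≤ g0 s) ?_ ?_ t hst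
  · exact le_refl _
  · intro m hm ih
    exact le_trans (hdec m (le_trans hs hm)).le ih

lemma sumW (hg : Summable g0) (c : ℤ) {d : ℤ} (hd : d ≠ 0) :
    Summable fun k : ℤ => g0 (c + k * d) := by
  have hinj : Function.Injective fun k : ℤ => c + k * d := by
    intro a b hab
    simp only [add_right_inj] at hab
    exact mul_right_cancel₀ hd hab
  exact hg.comp_injective hinj

lemma Wf_anti (hg : Summable g0) (hsupp : Function.support g0 = {t : ℤ | 0 ≤ t})
    (hpos : ∀ t : ℤ, 0 ≤ t → 0 < g0 t) (hdec : ∀ t : ℤ, 0 ≤ t → g0 (t + 1) < g0 t)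
    {M a b : ℕ} (hab : a ≤ b) (hb : b < M) :
    Wf g0 M b ≤ Wf g0 M a := by
  have hM0 : 0 < M := by omega
  have hM : (0:ℤ) < (M:ℤ) := by exact_mod_cast hM0
  apply Summable.tsum_le_tsum _ (sumW hg _ hM.ne') (sumW hg _ hM.ne')
  intro k
  rcases le_or_gt 0 k with hk | hk
  · apply g_anti hdec
    · positivity
    · have : (a:ℤ) ≤ b := by exact_mod_cast hab
      linarith
  · have hkM : k * (M:ℤ) ≤ -M := by
      have h1 : k ≤ -1 := by omega
      have := mul_le_mul_of_nonneg_right h1 hM.le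
      linarith
    have hbM : (b:ℤ) + k * M < 0 := by
      have : (b:ℤ) < M := by exact_mod_cast hb
      linarith
    rw [g_zero hsupp hbM]
    exact g_nonneg hsupp hpos _

end gfacts

section split

lemma pbar_split {g0 : ℤ → ℝ} (hg : Summable g0) (n P Pd : ℕ) (hP : 0 < P)
    (hnp : (2 * n + 1) * P = 2 * Pd) (j : Fin P) :
    pbar g0 P j = ∑ m ∈ Finset.range (2 * n + 1), Wf g0 (2 * Pd) ((j : ℕ) + m * P) := by
  set N := 2 * n + 1 with hN
  have hN0 : 0 < N := by omega
  have hNZ : (0 : ℤ) < (N : ℤ) := by exact_mod_cast hN0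
  have hPZ : ((P : ℤ)) ≠ 0 := by exact_mod_cast hP.ne'
  have hnp' : ((N : ℤ)) * P = 2 * Pd := by exact_mod_cast hnp
  haveI : NeZero N := ⟨hN0.ne'⟩
  let e : Fin N × ℤ ≃ ℤ := (Equiv.prodComm (Fin N) ℤ).trans (Int.divModEquiv N).symm
  have he : ∀ (m : Fin N) (k : ℤ), e (m, k) = k * (N : ℤ) + (m : ℤ) := by
    intro m k
    simp [e, Int.divModEquiv]
  have h1 : pbar g0 P j = ∑' p : Fin N × ℤ, g0 (((j : ℕ) : ℤ) + (e p) * P) :=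
    (Equiv.tsum_eq e (fun z => g0 (((j : ℕ) : ℤ) + z * P))).symm
  rw [h1]
  have hsum : Summable (fun p : Fin N × ℤ => g0 (((j : ℕ) : ℤ) + (e p) * P)) :=
    (sumW hg _ hPZ).comp_injective e.injective
  rw [Summable.tsum_prod' hsum (fun m => by
    have : Function.Injective (fun k : ℤ => ((m : Fin N), k)) := by
      intro a b hab; simpa using hab
    exact hsum.comp_injective this)]
  rw [tsum_fintype]
  have hterm : ∀ m : Fin N, (∑' k : ℤ, g0 (((j : ℕ) : ℤ) + (e (m, k)) * P))
      = Wf g0 (2 * Pd) ((j : ℕ) + (m : ℕ) * P) := by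
    intro m
    apply tsum_congr
    intro k
    congr 1
    rw [he]
    have hN' : (N : ℤ) = 2 * n + 1 := by exact_mod_cast hN
    push_cast
    linear_combination k * hnp'
  rw [Finset.sum_congr rfl (fun m _ => hterm m)]
  exact Fin.sum_univ_eq_sum_range (fun m => Wf g0 (2 * Pd) ((j : ℕ) + m * P)) N

end split

section qmat

open Fin.NatCast Fin.CommRing

lemma Qmat_mulVec (P : ℕ) [NeZero P] (v : Fin P → ℝ) (i : Fin P) :
    ((Qmat P).mulVec v) i = v (i - 1) := by
  have key : ∀ j : Fin P, ((i : ℕ) = ((j : ℕ) + 1) % P) ↔ j = i - 1 := by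
    intro j
    have h1 : ((j + 1 : Fin P) : ℕ) = ((j : ℕ) + 1) % P := by
      rw [Fin.val_add, Fin.val_one']
      conv_rhs => rw [Nat.add_mod]
      rw [Nat.mod_eq_of_lt j.isLt]
    constructor
    · intro h
      have h2 : i = j + 1 := Fin.ext (by rw [h1]; exact h)
      rw [h2]; ring
    · intro h
      rw [← h1, h]
      congr 1
      ring
  simp only [Matrix.mulVec, dotProduct, Qmat, Matrix.of_apply]
  rw [Finset.sum_congr rfl (fun j _ => by rw [if_congr (key j) rfl rfl])]
  simp

lemma Qmat_pow_mulVec (P : ℕ) [NeZero P] (k : ℕ) :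
    ∀ (v : Fin P → ℝ) (i : Fin P), ((Qmat P ^ k).mulVec v) i = v (i - (k : Fin P)) := by
  induction k with
  | zero => intro v i; simp
  | succ k ih =>
    intro v i
    rw [pow_succ, ← Matrix.mulVec_mulVec, ih]
    rw [Qmat_mulVec]
    congr 1
    push_cast
    ring

end qmat

section keyform

open Fin.NatCast Fin.CommRing

set_option maxHeartbeats 1000000 in
lemma keyformula {g0 : ℤ → ℝ} (hg : Summable g0) (Pd n P : ℕ) (hP : 0 < P)
    (hnp : (2 * n + 1) * P = 2 * Pd) (i : Fin P) :
    (-((Qmat P ^ Pd).mulVec ((Matrix.circulant (pbar g0 P)).mulVec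
        (fun j : Fin P => if (j : ℕ) < P / 2 then (1 : ℝ) else -1)))) i
    = ∑ r ∈ Finset.range (2 * Pd), Wf g0 (2 * Pd) r * sqw P ((i : ℕ) + 2 * Pd - r) := by
  haveI : NeZero P := ⟨hP.ne'⟩
  have hPd0 : 0 < Pd := by
    have h0 : 0 < (2 * n + 1) * P := by positivity
    omega
  have hev : 2 ∣ P := by
    have h1 : Nat.Coprime 2 (2 * n + 1) := by
      rw [Nat.coprime_two_left]
      exact ⟨n, by omega⟩
    exact h1.dvd_of_dvd_mul_left ⟨Pd, hnp⟩
  have hP2 : P = 2 * (P / 2) := (Nat.mul_div_cancel' hev).symm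
  have hPh0 : 0 < P / 2 := by omega
  have hPhP : P / 2 < P := by omega
  have hPdeq : Pd = n * P + P / 2 := by
    have hA : (2 * n + 1) * P = 2 * (n * P) + P := by ring
    omega
  set sP : Fin P → ℝ := fun j : Fin P => if (j : ℕ) < P / 2 then (1 : ℝ) else -1 with hsPdef
  have hsq : ∀ x : Fin P, sP x = sqw P (x : ℕ) := by
    intro x
    simp only [hsPdef, sqw]
    rw [Nat.mod_eq_of_lt x.isLt]
  have hcast : ((Pd : ℕ) : Fin P) = (⟨P / 2, hPhP⟩ : Fin P) := by
    apply Fin.ext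
    rw [Fin.val_natCast, hPdeq, Nat.add_comm, Nat.add_mul_mod_self_right]
    exact Nat.mod_eq_of_lt hPhP
  have hcirc : ∀ x : Fin P, (Matrix.circulant (pbar g0 P)).mulVec sP x
      = ∑ j : Fin P, pbar g0 P (x - j) * sP j := by
    intro x
    simp [Matrix.mulVec, dotProduct, Matrix.circulant_apply]
  have hQstep : (-((Qmat P ^ Pd).mulVec ((Matrix.circulant (pbar g0 P)).mulVec sP))) i
      = -∑ j : Fin P, pbar g0 P (i - ⟨P / 2, hPhP⟩ - j) * sP j := by
    rw [Pi.neg_apply, Qmat_pow_mulVec, hcast, hcirc]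
  have hflip : ∀ j : Fin P, sP (j - ⟨P / 2, hPhP⟩) = -sP j := by
    intro j
    have hval : ((j - (⟨P / 2, hPhP⟩ : Fin P) : Fin P) : ℕ) = ((j : ℕ) + P / 2) % P := by
      rw [Fin.sub_def]
      show (P - P / 2 + (j : ℕ)) % P = ((j : ℕ) + P / 2) % P
      have h5 : P - P / 2 = P / 2 := by omega
      rw [h5, Nat.add_comm]
    rw [hsq, hsq, hval, sqw_mod, sqw_flip _ _ hP2 hP]
  have hre1 : ∑ j : Fin P, pbar g0 P (i - ⟨P / 2, hPhP⟩ - j) * sP j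
      = ∑ j : Fin P, pbar g0 P (i - j) * (-sP j) := by
    rw [← Equiv.sum_comp (Equiv.subRight (⟨P / 2, hPhP⟩ : Fin P))
        (fun j => pbar g0 P (i - ⟨P / 2, hPhP⟩ - j) * sP j)]
    apply Finset.sum_congr rfl
    intro j _
    simp only [Equiv.subRight_apply]
    have harg : i - ⟨P / 2, hPhP⟩ - (j - ⟨P / 2, hPhP⟩) = i - j := by abel
    rw [harg, hflip]
  have hre1' : -∑ j : Fin P, pbar g0 P (i - ⟨P / 2, hPhP⟩ - j) * sP j
      = ∑ j : Fin P, pbar g0 P (i - j) * sP j := by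
    rw [hre1]
    simp [mul_neg]
  have hre2 : ∑ j : Fin P, pbar g0 P (i - j) * sP j
      = ∑ j : Fin P, pbar g0 P j * sP (i - j) := by
    rw [← Equiv.sum_comp (Equiv.subLeft i) (fun j => pbar g0 P j * sP (i - j))]
    apply Finset.sum_congr rfl
    intro j _
    simp only [Equiv.subLeft_apply]
    rw [sub_sub_cancel]
  have hsplit : ∑ j : Fin P, pbar g0 P j * sP (i - j)
      = ∑ j : Fin P, ∑ m ∈ Finset.range (2 * n + 1),
          Wf g0 (2 * Pd) ((j : ℕ) + m * P) * sqw P ((i : ℕ) + (P - (j : ℕ))) := by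
    apply Finset.sum_congr rfl
    intro j _
    rw [pbar_split hg n P Pd hP hnp j, Finset.sum_mul]
    apply Finset.sum_congr rfl
    intro m _
    congr 1
    rw [hsq]
    have hval : ((i - j : Fin P) : ℕ) = ((i : ℕ) + (P - (j : ℕ))) % P := by
      rw [Fin.sub_def]
      show (P - (j : ℕ) + (i : ℕ)) % P = ((i : ℕ) + (P - (j : ℕ))) % P
      rw [Nat.add_comm]
    rw [hval, sqw_mod]
  have hbij : ∑ j : Fin P, ∑ m ∈ Finset.range (2 * n + 1),
        Wf g0 (2 * Pd) ((j : ℕ) + m * P) * sqw P ((i : ℕ) + (P - (j : ℕ)))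
      = ∑ r ∈ Finset.range (2 * Pd), Wf g0 (2 * Pd) r * sqw P ((i : ℕ) + 2 * Pd - r) := by
    rw [Fin.sum_univ_eq_sum_range (fun j => ∑ m ∈ Finset.range (2 * n + 1),
        Wf g0 (2 * Pd) (j + m * P) * sqw P ((i : ℕ) + (P - j)))]
    rw [← Finset.sum_product']
    refine Finset.sum_nbij' (fun p : ℕ × ℕ => p.1 + p.2 * P) (fun r => (r % P, r / P))
      ?_ ?_ ?_ ?_ ?_
    · rintro ⟨j, m⟩ ha
      rw [Finset.mem_product, Finset.mem_range, Finset.mem_range] at ha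
      rw [Finset.mem_range]
      show j + m * P < 2 * Pd
      have h1 : (m + 1) * P ≤ (2 * n + 1) * P := Nat.mul_le_mul_right P (by omega)
      have h2 : (m + 1) * P = m * P + P := by ring
      omega
    · intro r hr
      rw [Finset.mem_range] at hr
      rw [Finset.mem_product, Finset.mem_range, Finset.mem_range]
      constructor
      · exact Nat.mod_lt _ hP
      · rw [Nat.div_lt_iff_lt_mul hP]
        omega
    · rintro ⟨j, m⟩ ha
      rw [Finset.mem_product, Finset.mem_range, Finset.mem_range] at ha
      have h1 : (j + m * P) % P = j := by
        rw [Nat.add_mul_mod_self_right, Nat.mod_eq_of_lt ha.1]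
      have h2 : (j + m * P) / P = m := by
        rw [Nat.add_mul_div_right _ _ hP, Nat.div_eq_of_lt ha.1]
        omega
      simp [h1, h2]
    · intro r hr
      simp only
      rw [Nat.mod_add_div']
    · rintro ⟨j, m⟩ ha
      rw [Finset.mem_product, Finset.mem_range, Finset.mem_range] at ha
      simp only
      congr 1
      have h1 : (m + 1) * P ≤ (2 * n + 1) * P := Nat.mul_le_mul_right P (by omega)
      have h2 : (m + 1) * P = m * P + P := by ring
      have hle : j + m * P ≤ (i : ℕ) + 2 * Pd := by omega
      have harg : (i : ℕ) + 2 * Pd - (j + m * P) = ((i : ℕ) + (P - j)) + (2 * n - m) * P := by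
        have hjP : j ≤ P := ha.1.le
        have hm : m ≤ 2 * n := by omega
        have hnp' : (2 * (n : ℤ) + 1) * (P : ℤ) = 2 * (Pd : ℤ) := by exact_mod_cast hnp
        zify [hle, hjP, hm]
        linear_combination -hnp'
      rw [harg, sqw_period]
  rw [hQstep, hre1', hre2, hsplit, hbij]

end keyform

/-- If the delayed relay feedback system `u^P = -Q_P^{P_d} H_{ḡ₀^P} sign(u^P)`
(`P_d ≥ 1`, `g₀ ∈ ℓ¹` strictly positive and strictly decreasing on `{0,1,2,…}`)
admits a self-oscillation of period `2P_d` with sign pattern `[1_{P_d}, -1_{P_d}]`,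
then for every `n ∈ ℤ≥0` such that `P = 2P_d/(2n+1)` is a positive integer there
exists a self-oscillation of period `P` with sign pattern `[1_{P/2}, -1_{P/2}]`.
(A self-oscillation of period `P` with sign pattern `s` exists iff
`-Q_P^{P_d} H_{ḡ₀^P} s` has entrywise sign pattern `s`.) -/
theorem stmt18 (Pd : ℕ) (hPd : 1 ≤ Pd)
    (g0 : ℤ → ℝ) (hg : Summable g0)
    (hsupp : Function.support g0 = {t : ℤ | 0 ≤ t})
    (hpos : ∀ t : ℤ, 0 ≤ t → 0 < g0 t)
    (hdec : ∀ t : ℤ, 0 ≤ t → g0 (t + 1) < g0 t)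
    (s2 : Fin (2 * Pd) → ℝ) (hs2 : s2 = fun i : Fin (2 * Pd) => if (i : ℕ) < Pd then 1 else -1)
    (hosc : ∀ i, Real.sign ((-((Qmat (2 * Pd) ^ Pd).mulVec
      ((Matrix.circulant (pbar g0 (2 * Pd))).mulVec s2))) i) = s2 i) :
    ∀ n P : ℕ, 0 < P → (2 * n + 1) * P = 2 * Pd →
      ∀ sP : Fin P → ℝ, sP = (fun i : Fin P => if (i : ℕ) < P / 2 then 1 else -1) →
        ∀ i, Real.sign ((-((Qmat P ^ Pd).mulVec
          ((Matrix.circulant (pbar g0 P)).mulVec sP))) i) = sP i := by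
  subst hs2
  intro n P hP hnp sP hsP i
  subst hsP
  haveI : NeZero P := ⟨hP.ne'⟩
  -- basic arithmetic facts
  have hev : 2 ∣ P := by
    have h1 : Nat.Coprime 2 (2 * n + 1) := by
      rw [Nat.coprime_two_left]
      exact ⟨n, by omega⟩
    exact h1.dvd_of_dvd_mul_left ⟨Pd, hnp⟩
  have hP2 : P = 2 * (P / 2) := (Nat.mul_div_cancel' hev).symm
  have hPh0 : 0 < P / 2 := by omega
  have hPdeq : Pd = n * P + P / 2 := by
    have hA : (2 * n + 1) * P = 2 * (n * P) + P := by ring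
    omega
  -- positivity of the period-2Pd sums, from the hypothesis
  have hS2pos : ∀ t : ℕ, t < Pd →
      0 < ∑ r ∈ Finset.range (2 * Pd), Wf g0 (2 * Pd) r * sqw (2 * Pd) (t + 2 * Pd - r) := by
    intro t ht
    have ht2 : t < 2 * Pd := by omega
    have hsame : (fun i : Fin (2 * Pd) => if (i : ℕ) < Pd then (1 : ℝ) else -1)
        = (fun j : Fin (2 * Pd) => if (j : ℕ) < (2 * Pd) / 2 then (1 : ℝ) else -1) := by
      funext x
      rw [show (2 * Pd) / 2 = Pd by omega]
    have h5 := hosc ⟨t, ht2⟩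
    rw [hsame, keyformula hg Pd 0 (2 * Pd) (by omega) (by ring) ⟨t, ht2⟩] at h5
    have h5' : Real.sign (∑ r ∈ Finset.range (2 * Pd),
        Wf g0 (2 * Pd) r * sqw (2 * Pd) (t + 2 * Pd - r)) = if t < (2 * Pd) / 2 then (1 : ℝ) else -1 := h5
    rw [if_pos (show t < (2 * Pd) / 2 by omega)] at h5'
    clear h5
    rcases lt_trichotomy (0 : ℝ)
        (∑ r ∈ Finset.range (2 * Pd), Wf g0 (2 * Pd) r * sqw (2 * Pd) (t + 2 * Pd - r))
        with hlt | heq | hgt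
    · exact hlt
    · rw [← heq, Real.sign_zero] at h5'
      norm_num at h5'
    · rw [Real.sign_of_neg hgt] at h5'
      norm_num at h5'
  -- splitting a sum over range (2 Pd) into two halves
  have hsplitsum : ∀ F : ℕ → ℝ, ∑ r ∈ Finset.range (2 * Pd), F r
      = (∑ r ∈ Finset.range Pd, F r) + ∑ r ∈ Finset.range Pd, F (Pd + r) := by
    intro F
    have h1 : ((∑ r ∈ Finset.Ico 0 Pd, F r) + ∑ r ∈ Finset.Ico Pd (2 * Pd), F r)
        = ∑ r ∈ Finset.Ico 0 (2 * Pd), F r :=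
      Finset.sum_Ico_consecutive F (Nat.zero_le Pd) (by omega)
    have h2 : ∑ r ∈ Finset.Ico Pd (2 * Pd), F r
        = ∑ r ∈ Finset.range (2 * Pd - Pd), F (Pd + r) := by
      rw [Finset.sum_Ico_eq_sum_range]
    rw [Finset.range_eq_Ico, ← h1, h2, show 2 * Pd - Pd = Pd by omega, ← Finset.range_eq_Ico]
  -- comparison of the period-P sum with the period-2Pd sum
  have hcomp : ∀ t : ℕ, t < P / 2 →
      (∑ r ∈ Finset.range (2 * Pd), Wf g0 (2 * Pd) r * sqw (2 * Pd) (t + 2 * Pd - r))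
        ≤ ∑ r ∈ Finset.range (2 * Pd), Wf g0 (2 * Pd) r * sqw P (t + 2 * Pd - r) := by
    intro t ht
    rw [← sub_nonneg, ← Finset.sum_sub_distrib]
    have hEq : (∑ r ∈ Finset.range (2 * Pd),
          (Wf g0 (2 * Pd) r * sqw P (t + 2 * Pd - r)
            - Wf g0 (2 * Pd) r * sqw (2 * Pd) (t + 2 * Pd - r)))
        = ∑ r ∈ Finset.range (2 * Pd),
            Wf g0 (2 * Pd) r * (sqw P (t + 2 * Pd - r) - sqw (2 * Pd) (t + 2 * Pd - r)) :=
      Finset.sum_congr rfl (fun r _ => by ring)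
    rw [hEq, hsplitsum, ← Finset.sum_add_distrib]
    apply Finset.sum_nonneg
    intro r hr
    have hr' : r < Pd := Finset.mem_range.mp hr
    set y := t + Pd - r with hydef
    have hkey1 : t + 2 * Pd - r = y + Pd := by omega
    have hkey2 : t + 2 * Pd - (Pd + r) = y := by omega
    rw [hkey1, hkey2]
    have hflipP : sqw P (y + Pd) = -sqw P y := by
      rw [show y + Pd = (y + P / 2) + n * P by omega, sqw_period, sqw_flip _ _ hP2 hP]
    have hflip2 : sqw (2 * Pd) (y + Pd) = -sqw (2 * Pd) y := by
      rw [show y + Pd = y + (2 * Pd) / 2 by omega, sqw_flip _ _ (by omega) (by omega)]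
    rw [hflipP, hflip2]
    have hW : Wf g0 (2 * Pd) (Pd + r) ≤ Wf g0 (2 * Pd) r :=
      Wf_anti hg hsupp hpos hdec (by omega) (by omega)
    have hy2 : y < 2 * Pd := by omega
    have hd : sqw P y - sqw (2 * Pd) y ≤ 0 := by
      rcases lt_or_ge y Pd with hc | hc
      · have h1 : sqw (2 * Pd) y = 1 := if_pos (by rw [Nat.mod_eq_of_lt hy2]; omega)
        rcases sqw_cases P y with h2 | h2 <;> rw [h1, h2] <;> norm_num
      · have h1 : sqw (2 * Pd) y = -1 := if_neg (by rw [Nat.mod_eq_of_lt hy2]; omega)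
        have h3 : sqw P y = -1 := by
          rw [show y = ((y - Pd) + P / 2) + n * P by omega, sqw_period, sqw_flip _ _ hP2 hP]
          have h4 : sqw P (y - Pd) = 1 :=
            if_pos (by rw [Nat.mod_eq_of_lt (by omega : y - Pd < P)]; omega)
          rw [h4]
        rw [h1, h3]; norm_num
    nlinarith [mul_nonneg (neg_nonneg.2 hd) (sub_nonneg.2 hW)]
  -- positivity of the period-P sums on the first half period
  have hSpos : ∀ t : ℕ, t < P / 2 →
      0 < ∑ r ∈ Finset.range (2 * Pd), Wf g0 (2 * Pd) r * sqw P (t + 2 * Pd - r) := by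
    intro t ht
    exact lt_of_lt_of_le (hS2pos t (by omega)) (hcomp t ht)
  -- antisymmetry in t
  have hanti : ∀ t : ℕ,
      (∑ r ∈ Finset.range (2 * Pd), Wf g0 (2 * Pd) r * sqw P ((t + P / 2) + 2 * Pd - r))
        = -∑ r ∈ Finset.range (2 * Pd), Wf g0 (2 * Pd) r * sqw P (t + 2 * Pd - r) := by
    intro t
    rw [← Finset.sum_neg_distrib]
    apply Finset.sum_congr rfl
    intro r hr
    have hr' : r < 2 * Pd := Finset.mem_range.mp hr
    rw [show t + P / 2 + 2 * Pd - r = (t + 2 * Pd - r) + P / 2 by omega,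
      sqw_flip _ _ hP2 hP]
    ring
  -- conclusion
  rw [keyformula hg Pd n P hP hnp i]
  show _ = if (i : ℕ) < P / 2 then (1 : ℝ) else -1
  rcases lt_or_ge ((i : ℕ)) (P / 2) with hi | hi
  · rw [if_pos hi]
    exact Real.sign_of_pos (hSpos (i : ℕ) hi)
  · rw [if_neg (by omega)]
    have hit : (i : ℕ) = ((i : ℕ) - P / 2) + P / 2 := by omega
    rw [hit, hanti]
    have hpos' : 0 < ∑ r ∈ Finset.range (2 * Pd),
        Wf g0 (2 * Pd) r * sqw P (((i : ℕ) - P / 2) + 2 * Pd - r) := by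
      apply hSpos
      have := i.isLt
      omega
    exact Real.sign_of_neg (by linarith)
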